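/- Consider the perturbed safe monotone flow ẋ = 𝓖_α(x) − Σ_{i=1}^m e_i(t)∇g_i(x) − Σ_{j=1}^k d_j(t)∇h_j(x) with C polyhedral, g(x) = Gx − c_g, h(x) = Hx − c_h, and [Gᵀ, Hᵀ]ᵀ of full rank. Then C is input-to-state safe with gain γ(r) = (λ_max(Q̃)/α)·r, where Q̃ = [[GGᵀ, GHᵀ], [HGᵀ, HHᵀ]]: for every ε > 0, if the disturbance satisfies γ(‖(e, d)‖_∞) < ε, then the inflated set C_ε = {x : g(x) ≤ ε, |h(x)| ≤ ε} is forward invariant under the perturbed flow. -/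
import Mathlib


open scoped RealInnerProductSpace BigOperators Topology
open Set Filter

noncomputable section

/-- The polyhedral constraint set `C = {x | Gx ≤ c_g, Hx = c_h}`,
with the rows of `G` and `H` given as vectors. -/
def polyC {n m k : ℕ} (G : Fin m → EuclideanSpace ℝ (Fin n)) (cg : Fin m → ℝ)
    (H : Fin k → EuclideanSpace ℝ (Fin n)) (ch : Fin k → ℝ) :
    Set (EuclideanSpace ℝ (Fin n)) :=
  {x | (∀ i, ⟪G i, x⟫ ≤ cg i) ∧ ∀ j, ⟪H j, x⟫ = ch j}

/-- Solution set of the variational inequality `VI(F, C)`. -/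
def SOL {n : ℕ} (F : EuclideanSpace ℝ (Fin n) → EuclideanSpace ℝ (Fin n))
    (C : Set (EuclideanSpace ℝ (Fin n))) : Set (EuclideanSpace ℝ (Fin n)) :=
  {xs | xs ∈ C ∧ ∀ x ∈ C, 0 ≤ ⟪x - xs, F xs⟫}

/-- The α-restricted tangent set in the polyhedral case. -/
def polyTalpha {n m k : ℕ} (G : Fin m → EuclideanSpace ℝ (Fin n)) (cg : Fin m → ℝ)
    (H : Fin k → EuclideanSpace ℝ (Fin n)) (ch : Fin k → ℝ) (α : ℝ)
    (x : EuclideanSpace ℝ (Fin n)) : Set (EuclideanSpace ℝ (Fin n)) :=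
  {ξ | (∀ i, ⟪G i, ξ⟫ ≤ -α * (⟪G i, x⟫ - cg i)) ∧
       ∀ j, ⟪H j, ξ⟫ = -α * (⟪H j, x⟫ - ch j)}

/-- The closed-loop control-affine vector field `𝓕(x,u,v) = -F(x) - Gᵀu - Hᵀv`. -/
def polyFcl {n m k : ℕ} (F : EuclideanSpace ℝ (Fin n) → EuclideanSpace ℝ (Fin n))
    (G : Fin m → EuclideanSpace ℝ (Fin n)) (H : Fin k → EuclideanSpace ℝ (Fin n))
    (x : EuclideanSpace ℝ (Fin n)) (u : Fin m → ℝ) (v : Fin k → ℝ) :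
    EuclideanSpace ℝ (Fin n) :=
  -F x - ∑ i, u i • G i - ∑ j, v j • H j

/-- `p` is the Euclidean projection of `y` onto `K`. -/
def IsProjOn {n : ℕ} (K : Set (EuclideanSpace ℝ (Fin n)))
    (y p : EuclideanSpace ℝ (Fin n)) : Prop :=
  p ∈ K ∧ ∀ z ∈ K, ‖p - y‖ ≤ ‖z - y‖

/-- The inflated constraint set `C_ε`. -/
def polyCeps {n m k : ℕ} (G : Fin m → EuclideanSpace ℝ (Fin n)) (cg : Fin m → ℝ)
    (H : Fin k → EuclideanSpace ℝ (Fin n)) (ch : Fin k → ℝ) (ε : ℝ) :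
    Set (EuclideanSpace ℝ (Fin n)) :=
  {x | (∀ i, ⟪G i, x⟫ - cg i ≤ ε) ∧ ∀ j, |⟪H j, x⟫ - ch j| ≤ ε}

/-- Barrier lemma: if `V t = V 0 + ∫₀ᵗ φ` with `φ s ≤ -α V s + δ`, `δ < α ε`,
and `V 0 ≤ ε`, then `V t ≤ ε` for all `t ≥ 0`. -/
lemma barrier_lemma (α ε δ : ℝ) (hα : 0 < α) (hδε : δ < α * ε)
    (V φ : ℝ → ℝ) (hVc : Continuous V)
    (hφ : ∀ t ≥ (0:ℝ), IntervalIntegrable φ MeasureTheory.volume 0 t)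
    (hFTC : ∀ t ≥ (0:ℝ), V t = V 0 + ∫ s in (0:ℝ)..t, φ s)
    (hb : ∀ s ≥ (0:ℝ), φ s ≤ -α * V s + δ)
    (hV0 : V 0 ≤ ε) : ∀ t ≥ (0:ℝ), V t ≤ ε := by
  intro t1 ht1
  by_contra hVt1
  push_neg at hVt1
  set S : Set ℝ := Icc 0 t1 ∩ {s | V s ≤ ε} with hSdef
  have hS0 : (0:ℝ) ∈ S := ⟨⟨le_refl 0, ht1⟩, hV0⟩
  have hSbdd : BddAbove S := ⟨t1, fun s hs => hs.1.2⟩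
  have hSclosed : IsClosed S := isClosed_Icc.inter (isClosed_le hVc continuous_const)
  set t0 := sSup S with ht0def
  have ht0S : t0 ∈ S := hSclosed.csSup_mem ⟨0, hS0⟩ hSbdd
  have ht0 : 0 ≤ t0 := le_csSup hSbdd hS0
  have ht0t1 : t0 ≤ t1 := ht0S.1.2
  have ht0lt : t0 < t1 := by
    rcases lt_or_eq_of_le ht0t1 with h | h
    · exact h
    · exfalso; rw [h] at ht0S; exact absurd ht0S.2 (not_le.2 hVt1)
  have hgt : ∀ s ∈ Ioc t0 t1, ε ≤ V s := by
    intro s hs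
    by_contra hle
    push_neg at hle
    exact absurd (le_csSup hSbdd ⟨⟨le_trans ht0 hs.1.le, hs.2⟩, hle.le⟩) (not_le.2 hs.1)
  have hgt' : ∀ s ∈ Icc t0 t1, ε ≤ V s := by
    have h2 : closure (Ioc t0 t1) ⊆ {u | ε ≤ V u} :=
      (isClosed_le continuous_const hVc).closure_subset_iff.mpr hgt
    rw [closure_Ioc ht0lt.ne] at h2
    exact h2
  have hint01 := hφ t0 ht0
  have hint11 := hφ t1 ht1
  have hint' : IntervalIntegrable φ MeasureTheory.volume t0 t1 :=
    hint01.symm.trans hint11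
  have hFTC' : V t1 = V t0 + ∫ s in t0..t1, φ s := by
    have e1 := hFTC t0 ht0
    have e2 := hFTC t1 ht1
    have hadd := intervalIntegral.integral_add_adjacent_intervals hint01 hint'
    rw [e1, e2, ← hadd]; ring
  have hmono : (∫ s in t0..t1, φ s) ≤ ∫ s in t0..t1, (δ - α * ε) := by
    apply intervalIntegral.integral_mono_on ht0t1 hint' intervalIntegrable_const
    intro s hs
    have h1 := hb s (le_trans ht0 hs.1)
    have h2 := hgt' s hs
    nlinarith
  rw [intervalIntegral.integral_const, smul_eq_mul] at hmono
  have hprod : (t1 - t0) * (δ - α * ε) ≤ 0 :=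
    mul_nonpos_of_nonneg_of_nonpos (by linarith) (by linarith)
  have hVt0 : V t0 ≤ ε := ht0S.2
  have : V t1 ≤ ε := by linarith
  exact absurd this (not_le.2 hVt1)

/-- The perturbed safe monotone flow is input-to-state safe:
with gain `γ(r) = (λ_max(Q̃)/α) r`, if `γ(‖(e,d)‖_∞) < ε` then `C_ε` is forward
invariant under the perturbed flow
`ẋ = 𝒢_α(x) − Σᵢ eᵢ(t)∇gᵢ(x) − Σⱼ dⱼ(t)∇hⱼ(x)`. -/
theorem statement18 {n m k : ℕ}
    (F : EuclideanSpace ℝ (Fin n) → EuclideanSpace ℝ (Fin n))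
    (hF : ContDiff ℝ 1 F)
    (G : Fin m → EuclideanSpace ℝ (Fin n)) (cg : Fin m → ℝ)
    (H : Fin k → EuclideanSpace ℝ (Fin n)) (ch : Fin k → ℝ)
    (hrank : LinearIndependent ℝ (Sum.elim G H))
    (α : ℝ) (hα : 0 < α)
    -- `lammax` bounds the largest eigenvalue of `Q̃ = [G;H][G;H]ᵀ`
    (lammax : ℝ)
    (hlammax : ∀ (u : Fin m → ℝ) (v : Fin k → ℝ),
      ‖(∑ i, u i • G i) + ∑ j, v j • H j‖ ^ 2 ≤
        lammax * ((∑ i, u i ^ 2) + ∑ j, v j ^ 2))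
    -- the safe monotone flow field
    (𝒢 : EuclideanSpace ℝ (Fin n) → EuclideanSpace ℝ (Fin n))
    (h𝒢 : ∀ x, IsProjOn (polyTalpha G cg H ch α x) (-F x) (𝒢 x))
    -- bounded measurable disturbances with `‖(e,d)‖_∞ ≤ r`
    (e : ℝ → Fin m → ℝ) (d : ℝ → Fin k → ℝ) (r : ℝ)
    (hbdd : ∀ t ≥ (0:ℝ), Real.sqrt ((∑ i, e t i ^ 2) + ∑ j, d t j ^ 2) ≤ r)
    -- the gain condition `γ(‖(e,d)‖_∞) < ε`
    (ε : ℝ) (hε : 0 < ε) (hgain : (lammax / α) * r < ε)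
    -- a Carathéodory solution of the perturbed flow
    (x : ℝ → EuclideanSpace ℝ (Fin n)) (hxcont : Continuous x)
    (hint : ∀ t ≥ (0:ℝ), IntervalIntegrable
      (fun s => 𝒢 (x s) - (∑ i, e s i • G i) - ∑ j, d s j • H j)
      MeasureTheory.volume 0 t)
    (hsol : ∀ t ≥ (0:ℝ),
      x t = x 0 + ∫ s in (0:ℝ)..t,
        (𝒢 (x s) - (∑ i, e s i • G i) - ∑ j, d s j • H j)) :
    -- forward invariance of `C_ε`
    x 0 ∈ polyCeps G cg H ch ε → ∀ t ≥ (0:ℝ), x t ∈ polyCeps G cg H ch ε := by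
  intro hx0 t ht
  set f : ℝ → EuclideanSpace ℝ (Fin n) :=
    fun s => 𝒢 (x s) - (∑ i, e s i • G i) - ∑ j, d s j • H j with hf
  set w : ℝ → EuclideanSpace ℝ (Fin n) :=
    fun s => (∑ i, e s i • G i) + ∑ j, d s j • H j with hw
  have hfw : ∀ s, f s = 𝒢 (x s) - w s := fun s => by
    simp only [hf, hw, sub_sub]
  have hr0 : 0 ≤ r := le_trans (Real.sqrt_nonneg _) (hbdd 0 le_rfl)
  have hδε : lammax * r < α * ε := by
    rw [div_mul_eq_mul_div] at hgain
    have := (div_lt_iff₀ hα).mp hgain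
    linarith
  -- the main per-row argument
  have main : ∀ (a : EuclideanSpace ℝ (Fin n)) (c : ℝ), ‖a‖ ^ 2 ≤ lammax →
      (∀ s, ⟪a, 𝒢 (x s)⟫ ≤ -α * (⟪a, x s⟫ - c)) →
      ⟪a, x 0⟫ - c ≤ ε → ⟪a, x t⟫ - c ≤ ε := by
    intro a c hna hproj h0
    have hlam0 : (0:ℝ) ≤ lammax := le_trans (sq_nonneg _) hna
    set L : EuclideanSpace ℝ (Fin n) →L[ℝ] ℝ := innerSL ℝ a with hL
    have hφint : ∀ u ≥ (0:ℝ), IntervalIntegrable (fun s => ⟪a, f s⟫)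
        MeasureTheory.volume 0 u := by
      intro u hu
      exact ⟨L.integrable_comp (hint u hu).1, L.integrable_comp (hint u hu).2⟩
    have hFTCa : ∀ u ≥ (0:ℝ), (⟪a, x u⟫ - c) = (⟪a, x 0⟫ - c) + ∫ s in (0:ℝ)..u, ⟪a, f s⟫ := by
      intro u hu
      have h1 := congrArg (fun y => ⟪a, y⟫) (hsol u hu)
      simp only [inner_add_right] at h1
      have h2 : (∫ s in (0:ℝ)..u, ⟪a, f s⟫) = ⟪a, ∫ s in (0:ℝ)..u, f s⟫ :=
        L.intervalIntegral_comp_comm (hint u hu)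
      rw [h2]
      rw [h1]; ring
    have hwb : ∀ s ≥ (0:ℝ), |⟪a, w s⟫| ≤ lammax * r := by
      intro s hs
      have hS0 : (0:ℝ) ≤ (∑ i, e s i ^ 2) + ∑ j, d s j ^ 2 := by positivity
      have hS : (∑ i, e s i ^ 2) + ∑ j, d s j ^ 2 ≤ r ^ 2 := by
        nlinarith [Real.sq_sqrt hS0, hbdd s hs, Real.sqrt_nonneg ((∑ i, e s i ^ 2) + ∑ j, d s j ^ 2)]
      have hw2 : ‖w s‖ ^ 2 ≤ lammax * r ^ 2 :=
        le_trans (hlammax (e s) (d s)) (mul_le_mul_of_nonneg_left hS hlam0)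
      have h1 : ‖a‖ ≤ Real.sqrt lammax := (Real.le_sqrt (norm_nonneg a) hlam0).mpr hna
      have h2 : ‖w s‖ ≤ Real.sqrt lammax * r := by
        have h3 : Real.sqrt (‖w s‖ ^ 2) ≤ Real.sqrt (lammax * r ^ 2) := Real.sqrt_le_sqrt hw2
        rwa [Real.sqrt_sq (norm_nonneg _), Real.sqrt_mul hlam0, Real.sqrt_sq hr0] at h3
      calc |⟪a, w s⟫| ≤ ‖a‖ * ‖w s‖ := abs_real_inner_le_norm _ _
        _ ≤ Real.sqrt lammax * (Real.sqrt lammax * r) :=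
            mul_le_mul h1 h2 (norm_nonneg _) (Real.sqrt_nonneg _)
        _ = lammax * r := by rw [← mul_assoc, Real.mul_self_sqrt hlam0]
    refine barrier_lemma α ε (lammax * r) hα hδε (fun u => ⟪a, x u⟫ - c)
      (fun s => ⟪a, f s⟫) ?_ hφint hFTCa ?_ h0 t ht
    · exact (continuous_const.inner hxcont).sub continuous_const
    · intro s hs
      have h1 := hproj s
      have h2 := (abs_le.mp (hwb s hs)).1
      simp only [hfw, inner_sub_right]
      linarith
  constructor
  · intro i
    have hna : ‖G i‖ ^ 2 ≤ lammax := by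
      have h := hlammax (Pi.single i 1) 0
      simpa [Pi.single_apply, ite_smul, Finset.sum_ite_eq'] using h
    refine main (G i) (cg i) hna (fun s => ((h𝒢 (x s)).1).1 i) (hx0.1 i)
  · intro j
    have hna : ‖H j‖ ^ 2 ≤ lammax := by
      have h := hlammax 0 (Pi.single j 1)
      simpa [Pi.single_apply, ite_smul, Finset.sum_ite_eq'] using h
    have hproj := fun s => ((h𝒢 (x s)).1).2 j
    have hup : ⟪H j, x t⟫ - ch j ≤ ε :=
      main (H j) (ch j) hna (fun s => le_of_eq (hproj s)) (abs_le.mp (hx0.2 j)).2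
    have hlo : ⟪-H j, x t⟫ - (-ch j) ≤ ε := by
      refine main (-H j) (-ch j) (by simpa using hna) ?_ ?_
      · intro s
        rw [inner_neg_left, inner_neg_left, hproj s]
        apply le_of_eq; ring
      · rw [inner_neg_left]
        have := (abs_le.mp (hx0.2 j)).1
        linarith
    rw [inner_neg_left] at hlo
    exact abs_le.mpr ⟨by linarith, hup⟩


end
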